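/- arXiv:2103.03942 — 5 statements merged into one kernel-verified Lean document; each statement's English description precedes it below -/
import Mathlib

section
/- Let p > 3 be a prime. For the one-parameter family y² = x³ − x² − x + t, the second-moment sum satisfies ∑_{t mod p} a_t(p)² = p² − 2p − χ(−3)·p, where a_t(p) := −∑_{x mod p} χ(x³ − x² − x + t). -/
/-!
Expanding the square and summing over `t` first, `∑ t, χ((t + u)(t + v))` is `q - 1` if `u = v`
and `-1` otherwise (a Jacobi sum), so the second moment of any family `y² = f(x) + t` equals
`q·N - q²`, where `N` counts the pairs `(x, y)` with `f x = f y`. For `f x = x³ - x² - x` we have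
`f x - f y = (x - y)·C(x, y)` with `C(x, y) = x² + xy + y² - x - y - 1`, and the diagonal meets
the conic `C = 0` in the two points `(1, 1)` and `(-1/3, -1/3)`, so `N = q + #C - 2`. Finally
`#C = q - χ(-3)`: for fixed `y` the number of roots `x` of `C` is `1 + χ` of the discriminant
`-3(y + 1)(y - 5/3)`, whose character sum is again of the first kind.
-/

open Finset

section FiniteField

variable {F : Type*} [Field F] [Fintype F] [DecidableEq F]

theorem quadraticChar_sum_mul_one_sub (hF : ringChar F ≠ 2) :
    ∑ x : F, quadraticChar F (x * (1 - x)) = -quadraticChar F (-1) := by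
  have h := jacobiSum_nontrivial_inv (quadraticChar_ne_one hF)
  rw [(quadraticChar_isQuadratic F).inv, jacobiSum] at h
  simpa only [← map_mul] using h

theorem quadraticChar_sum_mul_self :
    ∑ t : F, quadraticChar F (t * t) = Fintype.card F - 1 := by
  have hsq : ∀ t : F, quadraticChar F (t * t) = (1 : MulChar F ℤ) t := fun t => by
    rw [← (quadraticChar_isQuadratic F).sq_eq_one, sq, MulChar.coeToFun_mul, Pi.mul_apply, map_mul]
  rw [sum_congr rfl fun t _ => hsq t, MulChar.sum_one_eq_card_units, Fintype.card_units,
    Nat.cast_pred Fintype.card_pos]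

theorem quadraticChar_sum_add_mul_add (hF : ringChar F ≠ 2) (a b : F) :
    ∑ t : F, quadraticChar F ((t + a) * (t + b)) =
      if a = b then (Fintype.card F : ℤ) - 1 else -1 := by
  split_ifs with hab
  · subst hab
    exact (Equiv.sum_comp (Equiv.addRight a) fun t => quadraticChar F (t * t)).trans
      quadraticChar_sum_mul_self
  · have hba : b - a ≠ 0 := sub_ne_zero.mpr (Ne.symm hab)
    have h1 : (-1 : F) ≠ 0 := neg_ne_zero.mpr one_ne_zero
    rw [← ((Equiv.mulLeft₀ (b - a) hba).trans (Equiv.subRight b)).sum_comp]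
    have key : ∀ x : F, ((b - a) * x - b + a) * ((b - a) * x - b + b) =
        -1 * ((b - a) ^ 2 * (x * (1 - x))) := fun x => by ring
    simp only [Equiv.trans_apply, Equiv.mulLeft₀_apply, Equiv.subRight_apply, key]
    simp only [map_mul (quadraticChar F) (-1), map_mul (quadraticChar F) ((b - a) ^ 2),
      quadraticChar_sq_one' hba, one_mul, ← mul_sum, quadraticChar_sum_mul_one_sub hF]
    linear_combination -quadraticChar_sq_one h1

theorem quadraticChar_card_quadratic_roots (hF : ringChar F ≠ 2) (b c : F) :
    (#{x : F | x ^ 2 + b * x + c = 0} : ℤ) = quadraticChar F (b ^ 2 - 4 * c) + 1 := by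
  rw [← quadraticChar_card_sqrts hF]
  have h4 : (4 : F) ≠ 0 := by
    simpa [show (4 : F) = 2 ^ 2 by norm_num] using Ring.two_ne_zero hF
  congr 1
  refine card_equiv ((Equiv.mulLeft₀ 2 (Ring.two_ne_zero hF)).trans (Equiv.addRight b)) fun x => ?_
  have key : (2 * x + b) ^ 2 - (b ^ 2 - 4 * c) = 4 * (x ^ 2 + b * x + c) := by ring
  simp only [mem_filter_univ, Set.mem_toFinset, Set.mem_ofPred_eq, Equiv.trans_apply,
    Equiv.mulLeft₀_apply, Equiv.coe_addRight]
  rw [← sub_eq_zero (a := (2 * x + b) ^ 2), key, mul_eq_zero, or_iff_right h4]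

theorem sum_sq_sum_quadraticChar_add (hF : ringChar F ≠ 2) (f : F → F) :
    ∑ t : F, (∑ x : F, quadraticChar F (f x + t)) ^ 2 =
      Fintype.card F * #{z : F × F | f z.1 = f z.2} - (Fintype.card F : ℤ) ^ 2 := by
  calc ∑ t : F, (∑ x : F, quadraticChar F (f x + t)) ^ 2
      = ∑ z : F × F, ∑ t : F, quadraticChar F ((t + f z.1) * (t + f z.2)) := by
        simp_rw [sq, sum_mul_sum, ← map_mul, add_comm (f _)]
        rw [sum_comm, Fintype.sum_prod_type]
        exact sum_congr rfl fun x _ => sum_comm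
    _ = ∑ z : F × F, ((Fintype.card F : ℤ) * (if f z.1 = f z.2 then 1 else 0) - 1) := by
        refine sum_congr rfl fun z _ => ?_
        rw [quadraticChar_sum_add_mul_add hF]
        split_ifs <;> ring
    _ = _ := by
        rw [sum_sub_distrib, ← mul_sum, sum_boole, sum_const, card_univ, Fintype.card_prod]
        simp only [nsmul_eq_mul, mul_one, Nat.cast_mul]
        ring

-- The conic of the divided difference `(f x - f y) / (x - y)` of `f x = x³ - x² - x`.
theorem card_conic_divided_difference (hF : ringChar F ≠ 2) (h3 : (3 : F) ≠ 0) :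
    (#{z : F × F | z.1 ^ 2 + z.1 * z.2 + z.2 ^ 2 - z.1 - z.2 - 1 = 0} : ℤ) =
      Fintype.card F - quadraticChar F (-3) := by
  have hfibres : (#{z : F × F | z.1 ^ 2 + z.1 * z.2 + z.2 ^ 2 - z.1 - z.2 - 1 = 0} : ℤ) =
      ∑ y : F, (#{x : F | x ^ 2 + (y - 1) * x + (y ^ 2 - y - 1) = 0} : ℤ) := by
    simp only [card_filter, Nat.cast_sum, Fintype.sum_prod_type_right]
    refine sum_congr rfl fun y _ => sum_congr rfl fun x _ => ?_
    congr 2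
    exact propext ⟨fun h => by linear_combination h, fun h => by linear_combination h⟩
  have hdisc (y : F) : (y - 1) ^ 2 - 4 * (y ^ 2 - y - 1) = -3 * ((y + 1) * (y + -5 / 3)) := by
    field_simp
    ring
  have hroots : (1 : F) ≠ -5 / 3 := by
    intro h
    field_simp at h
    exact pow_ne_zero 3 (Ring.two_ne_zero hF) (by linear_combination h)
  simp only [hfibres, quadraticChar_card_quadratic_roots hF, hdisc,
    map_mul (quadraticChar F) (-3), sum_add_distrib, ← mul_sum, quadraticChar_sum_add_mul_add hF,
    if_neg hroots, sum_const, card_univ, nsmul_eq_mul, mul_one]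
  ring

theorem card_pairs_cubic_eq (hF : ringChar F ≠ 2) (h3 : (3 : F) ≠ 0) :
    (#{z : F × F | z.1 ^ 3 - z.1 ^ 2 - z.1 = z.2 ^ 3 - z.2 ^ 2 - z.2} : ℤ) =
      2 * Fintype.card F - 2 - quadraticChar F (-3) := by
  set D : Finset (F × F) := {z | z.1 = z.2}
  set Q : Finset (F × F) := {z | z.1 ^ 2 + z.1 * z.2 + z.2 ^ 2 - z.1 - z.2 - 1 = 0}
  have hunion : ({z : F × F | z.1 ^ 3 - z.1 ^ 2 - z.1 = z.2 ^ 3 - z.2 ^ 2 - z.2} : Finset (F × F)) =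
      D ∪ Q := by
    rw [← filter_or]
    refine filter_congr fun z _ => ?_
    rw [← sub_eq_zero, ← sub_eq_zero (a := z.1), ← mul_eq_zero]
    constructor <;> intro h <;> linear_combination h
  have hD : #D = Fintype.card F := by
    rw [← card_univ, ← diag_card (univ : Finset F), diag_eq_filter, univ_product_univ]
  have hne : (1 : F) ≠ -3⁻¹ := by
    intro h
    field_simp at h
    exact pow_ne_zero 2 (Ring.two_ne_zero hF) (by linear_combination h)
  have hDQ : D ∩ Q = {(1, 1), (-3⁻¹, -3⁻¹)} := by
    ext ⟨x, y⟩
    simp only [D, Q, ← filter_and, mem_filter_univ, mem_insert, mem_singleton, Prod.mk.injEq]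
    constructor
    · rintro ⟨rfl, h⟩
      have hfac : (x - 1) * (3 * x + 1) = 0 := by linear_combination h
      rcases mul_eq_zero.mp hfac with h1 | h1
      · exact Or.inl ⟨by linear_combination h1, by linear_combination h1⟩
      · have hx : x = -3⁻¹ := by field_simp; linear_combination h1
        exact Or.inr ⟨hx, hx⟩
    · rintro (⟨rfl, rfl⟩ | ⟨rfl, rfl⟩)
      · norm_num
      · exact ⟨rfl, by field_simp; ring⟩
  have := card_union_add_card_inter D Q
  rw [hDQ, card_pair (by simpa using hne), hD] at this
  rw [hunion]
  linarith [card_conic_divided_difference hF h3]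

end FiniteField

/-- For a prime `p > 3` and the family `y² = x³ - x² - x + t`, the
second-moment sum equals `p² - 2p - χ(-3) p`. -/
theorem second_moment_family_one (p : ℕ) [Fact p.Prime] (hp : 3 < p) :
    ∑ t : ZMod p,
      (-∑ x : ZMod p,
        legendreSym p ((x.val : ℤ) ^ 3 - (x.val : ℤ) ^ 2 - (x.val : ℤ) + (t.val : ℤ))) ^ 2 =
      (p : ℤ) ^ 2 - 2 * (p : ℤ) - legendreSym p (-3) * (p : ℤ) := by
  have hchar : ringChar (ZMod p) ≠ 2 := by rw [ZMod.ringChar_zmod_n]; omega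
  have h3 : (3 : ZMod p) ≠ 0 := by
    rw [← Nat.cast_ofNat, Ne, ZMod.natCast_eq_zero_iff]
    exact fun h => by have := Nat.le_of_dvd (by norm_num) h; omega
  have hleg (t x : ZMod p) :
      legendreSym p ((x.val : ℤ) ^ 3 - (x.val : ℤ) ^ 2 - (x.val : ℤ) + (t.val : ℤ)) =
        quadraticChar (ZMod p) ((x ^ 3 - x ^ 2 - x) + t) := by
    simp [legendreSym]
  have hleg3 : legendreSym p (-3) = quadraticChar (ZMod p) (-3) := by
    simp [legendreSym]
  simp only [neg_sq, hleg, hleg3]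
  rw [sum_sq_sum_quadraticChar_add hchar, card_pairs_cubic_eq hchar h3, ZMod.card]
  ring
end

section
/- Let p > 3 be a prime. For the one-parameter family y² = x³ − t x² + (x − 1) t², the first-moment sum satisfies: ∑_{t mod p} a_t(p) = −2p if p ≡ 1 (mod 12), ∑_{t mod p} a_t(p) = 2p if p ≡ 7 (mod 12), and ∑_{t mod p} a_t(p) = 0 for all other primes p > 3, where a_t(p) := −∑_{x mod p} χ(x³ − t x² + x t² − t²). -/
/-!
Swapping the two sums, for fixed `x` the inner sum over `t` is the character sum of the quadratic
polynomial `(x - 1) t² - x² t + x³`. Completing the square reduces it to `∑ χ(u² - D)`, which is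
`-1` for `D ≠ 0` (a Jacobi sum), so the inner sum is `-χ(x - 1)` unless the discriminant
`D = x³ (4 - 3x)` vanishes, where it is `(p - 1) χ(x - 1)`. Summed over `x`, the terms `-χ(x - 1)`
cancel and the two roots `x = 0`, `x = 4/3` leave `p (χ(-1) + χ(3))`; both symbols depend only on
`p mod 12`.
-/

open Finset

section QuadraticCharSums

variable {F : Type*} [Field F] [Fintype F] [DecidableEq F]

local notation "χ" => quadraticChar F

lemma quadraticChar_sum_sub (hF : ringChar F ≠ 2) (c : F) : ∑ x : F, χ (x - c) = 0 := by
  rw [Fintype.sum_equiv (Equiv.subRight c) (fun x => χ (x - c)) χ fun _ => rfl,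
    quadraticChar_sum_zero hF]

lemma quadraticChar_sum_mul_sub (hF : ringChar F ≠ 2) {d : F} (hd : d ≠ 0) :
    ∑ x : F, χ x * χ (x - d) = -1 := by
  have hJ : jacobiSum χ χ = -χ (-1) := by
    simpa only [(quadraticChar_isQuadratic F).inv] using
      jacobiSum_nontrivial_inv (quadraticChar_ne_one hF)
  have hd2 : χ d * χ d = 1 := by rw [← sq, quadraticChar_sq_one hd]
  have hm2 : χ (-1) * χ (-1) = 1 := by
    rw [← sq, quadraticChar_sq_one (neg_ne_zero.2 (one_ne_zero' F))]
  calc ∑ x : F, χ x * χ (x - d) = ∑ y : F, χ (d * y) * χ (d * y - d) :=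
        (Fintype.sum_equiv (Equiv.mulLeft₀ d hd) _ _ fun _ => rfl).symm
    _ = χ (-1) * jacobiSum χ χ := by
        rw [jacobiSum, mul_sum]
        refine sum_congr rfl fun y _ => ?_
        rw [show d * y - d = d * (-1) * (1 - y) by ring, map_mul, map_mul, map_mul]
        linear_combination (χ (-1) * χ y * χ (1 - y)) * hd2
    _ = -1 := by rw [hJ]; linear_combination -hm2

lemma sum_comp_sq_eq_sum_quadraticChar_add_one_mul (hF : ringChar F ≠ 2) (g : F → ℤ) :
    ∑ u : F, g (u ^ 2) = ∑ v : F, (χ v + 1) * g v := by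
  rw [← sum_fiberwise' univ (· ^ 2) g]
  refine sum_congr rfl fun v _ => ?_
  rw [sum_const, nsmul_eq_mul, ← quadraticChar_card_sqrts hF v, Set.toFinset_ofPred]

lemma quadraticChar_sum_sq_sub (hF : ringChar F ≠ 2) {d : F} (hd : d ≠ 0) :
    ∑ u : F, χ (u ^ 2 - d) = -1 := by
  simp only [sum_comp_sq_eq_sum_quadraticChar_add_one_mul hF (fun v => χ (v - d)), add_mul,
    one_mul, sum_add_distrib, quadraticChar_sum_mul_sub hF hd, quadraticChar_sum_sub hF, add_zero]

lemma quadraticChar_sum_sq : ∑ u : F, χ (u ^ 2) = Fintype.card F - 1 := by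
  have h : ∀ u : F, χ (u ^ 2) = 1 - if u = 0 then 1 else 0 := by
    intro u
    split_ifs with hu
    · simp [hu]
    · simp [quadraticChar_sq_one' hu]
  simp [h, sum_sub_distrib]

theorem quadraticChar_sum_quadratic (hF : ringChar F ≠ 2) {a : F} (ha : a ≠ 0) (b c : F) :
    ∑ t : F, χ (a * t ^ 2 + b * t + c) =
      χ a * ((if discrim a b c = 0 then (Fintype.card F : ℤ) else 0) - 1) := by
  have h2a : 2 * a ≠ 0 := mul_ne_zero (Ring.two_ne_zero hF) ha
  have h4a : χ (4 * a) = χ a := by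
    rw [show (4 : F) * a = 2 ^ 2 * a by norm_num, map_mul,
      quadraticChar_sq_one' (Ring.two_ne_zero hF), one_mul]
  have ha2 : χ a * χ a = 1 := by rw [← sq, quadraticChar_sq_one ha]
  -- `4a (a t² + b t + c) = (2a t + b)² - discrim a b c`
  have hsq :
      χ a * ∑ t : F, χ (a * t ^ 2 + b * t + c) = ∑ u : F, χ (u ^ 2 - discrim a b c) := by
    rw [mul_sum, ← Fintype.sum_equiv ((Equiv.mulLeft₀ (2 * a) h2a).trans (Equiv.addRight b))
      (fun t => χ ((2 * a * t + b) ^ 2 - discrim a b c)) (fun u => χ (u ^ 2 - discrim a b c))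
      fun _ => rfl]
    refine sum_congr rfl fun t _ => ?_
    rw [← h4a, ← map_mul, discrim]
    ring_nf
  calc ∑ t : F, χ (a * t ^ 2 + b * t + c)
      = χ a * (χ a * ∑ t : F, χ (a * t ^ 2 + b * t + c)) := by
        rw [← mul_assoc, ha2, one_mul]
    _ = χ a * ((if discrim a b c = 0 then (Fintype.card F : ℤ) else 0) - 1) := by
        rw [hsq]
        split_ifs with hd
        · simp only [hd, sub_zero, quadraticChar_sum_sq]
        · rw [quadraticChar_sum_sq_sub hF hd, zero_sub]

lemma quadraticChar_sum_family_fiber (hF : ringChar F ≠ 2) (x : F) :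
    ∑ t : F, χ (x ^ 3 - t * x ^ 2 + x * t ^ 2 - t ^ 2) =
      χ (x - 1) * ((if x ^ 3 * (4 - 3 * x) = 0 then (Fintype.card F : ℤ) else 0) - 1) := by
  by_cases hx : x = 1
  · subst hx
    have hlin : ∀ t : F, (1 : F) ^ 3 - t * 1 ^ 2 + 1 * t ^ 2 - t ^ 2 = 1 - t := fun t => by ring
    rw [sub_self, quadraticChar_zero, zero_mul, sum_congr rfl fun t _ => congrArg χ (hlin t),
      Fintype.sum_equiv (Equiv.subLeft 1) (fun t => χ (1 - t)) χ fun _ => rfl,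
      quadraticChar_sum_zero hF]
  · have hdisc : discrim (x - 1) (-x ^ 2) (x ^ 3) = x ^ 3 * (4 - 3 * x) := by rw [discrim]; ring
    rw [← hdisc, ← quadraticChar_sum_quadratic hF (sub_ne_zero.2 hx)]
    exact sum_congr rfl fun t _ => by ring_nf

theorem quadraticChar_sum_sum_family (hF : ringChar F ≠ 2) (h3 : (3 : F) ≠ 0) :
    ∑ t : F, ∑ x : F, χ (x ^ 3 - t * x ^ 2 + x * t ^ 2 - t ^ 2) =
      (χ (-1) + χ 3) * Fintype.card F := by
  have hroots : ∀ x : F, x ^ 3 * (4 - 3 * x) = 0 ↔ x = 0 ∨ x = 4 / 3 := by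
    intro x
    rw [mul_eq_zero, pow_eq_zero_iff three_ne_zero, sub_eq_zero, eq_div_iff h3, mul_comm x]
    exact or_congr_right eq_comm
  have h4 : (4 : F) ≠ 0 := by
    rw [show (4 : F) = 2 * 2 by norm_num]
    exact mul_ne_zero (Ring.two_ne_zero hF) (Ring.two_ne_zero hF)
  have hinv : (4 / 3 - 1 : F) = 3 * (3⁻¹) ^ 2 := by field_simp; norm_num
  calc ∑ t : F, ∑ x : F, χ (x ^ 3 - t * x ^ 2 + x * t ^ 2 - t ^ 2)
      = ∑ x : F, ((Fintype.card F : ℤ) * (if x ^ 3 * (4 - 3 * x) = 0 then χ (x - 1) else 0)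
          - χ (x - 1)) := by
        rw [sum_comm]
        refine sum_congr rfl fun x _ => ?_
        rw [quadraticChar_sum_family_fiber hF]
        split_ifs <;> ring
    _ = Fintype.card F * ∑ x ∈ {0, 4 / 3}, χ (x - 1) := by
        rw [sum_sub_distrib, ← mul_sum, ← sum_filter, quadraticChar_sum_sub hF, sub_zero]
        congr 2
        ext x
        simp [hroots]
    _ = (χ (-1) + χ 3) * Fintype.card F := by
        rw [sum_pair (div_ne_zero h4 h3).symm, zero_sub, hinv, map_mul,
          quadraticChar_sq_one' (inv_ne_zero h3), mul_one, mul_comm]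

end QuadraticCharSums

lemma jacobiSym_mod_right_of_dvd {a : ℤ} {m n : ℕ} (ha : 4 * a.natAbs ∣ m) (hn : Odd n) :
    jacobiSym a n = jacobiSym a (n % m) := by
  have h2m : 2 ∣ m := ((by norm_num : 2 ∣ 4).trans (dvd_mul_right 4 _)).trans ha
  have hnm : Odd (n % m) := by rwa [Nat.odd_iff, Nat.mod_mod_of_dvd n h2m, ← Nat.odd_iff]
  rw [jacobiSym.mod_right a hn, jacobiSym.mod_right a hnm, Nat.mod_mod_of_dvd n ha]

lemma legendreSym_neg_one_add_legendreSym_three {p : ℕ} [Fact p.Prime] (hp : 3 < p) :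
    legendreSym p (-1) + legendreSym p 3 =
      if p % 12 = 1 then 2 else if p % 12 = 7 then -2 else 0 := by
  have hodd : Odd p := (Fact.out : p.Prime).odd_of_ne_two (by omega)
  have h3 : ¬3 ∣ p := fun h => by
    have := (Nat.prime_dvd_prime_iff_eq Nat.prime_three Fact.out).1 h; omega
  rw [jacobiSym.legendreSym.to_jacobiSym, jacobiSym.legendreSym.to_jacobiSym,
    jacobiSym_mod_right_of_dvd (a := -1) (m := 12) (by decide) hodd,
    jacobiSym_mod_right_of_dvd (a := 3) (m := 12) (by decide) hodd]
  have hres : p % 12 = 1 ∨ p % 12 = 5 ∨ p % 12 = 7 ∨ p % 12 = 11 := by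
    rw [Nat.odd_iff] at hodd; omega
  rcases hres with h | h | h | h <;> rw [h] <;> norm_num

/-- For a prime `p > 3` and the family `y² = x³ - t x² + (x - 1) t²`,
the first-moment sum is `-2p` if `p ≡ 1 (mod 12)`, `2p` if `p ≡ 7 (mod 12)`, and
`0` otherwise, where `a_t(p) = -∑_{x mod p} χ(x³ - t x² + x t² - t²)`. -/
theorem first_moment_family_two (p : ℕ) [Fact p.Prime] (hp : 3 < p) :
    (p % 12 = 1 →
      ∑ t : ZMod p,
        (-∑ x : ZMod p,
          legendreSym p ((x.val : ℤ) ^ 3 - (t.val : ℤ) * (x.val : ℤ) ^ 2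
            + (x.val : ℤ) * (t.val : ℤ) ^ 2 - (t.val : ℤ) ^ 2)) = -2 * (p : ℤ)) ∧
    (p % 12 = 7 →
      ∑ t : ZMod p,
        (-∑ x : ZMod p,
          legendreSym p ((x.val : ℤ) ^ 3 - (t.val : ℤ) * (x.val : ℤ) ^ 2
            + (x.val : ℤ) * (t.val : ℤ) ^ 2 - (t.val : ℤ) ^ 2)) = 2 * (p : ℤ)) ∧
    (p % 12 ≠ 1 → p % 12 ≠ 7 →
      ∑ t : ZMod p,
        (-∑ x : ZMod p,
          legendreSym p ((x.val : ℤ) ^ 3 - (t.val : ℤ) * (x.val : ℤ) ^ 2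
            + (x.val : ℤ) * (t.val : ℤ) ^ 2 - (t.val : ℤ) ^ 2)) = 0) := by
  have hF : ringChar (ZMod p) ≠ 2 := by rw [ZMod.ringChar_zmod_n]; omega
  have h3 : (3 : ZMod p) ≠ 0 := fun h => by
    have := Nat.le_of_dvd three_pos ((ZMod.natCast_eq_zero_iff 3 p).1 (by exact_mod_cast h))
    omega
  have hchar := legendreSym_neg_one_add_legendreSym_three hp
  simp only [legendreSym, sum_neg_distrib] at hchar ⊢
  push_cast [ZMod.natCast_val, ZMod.cast_id', id_eq] at hchar ⊢
  rw [quadraticChar_sum_sum_family hF h3, ZMod.card, hchar]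
  exact ⟨fun h1 => by simp [h1], fun h7 => by simp [h7], fun h1 h7 => by simp [h1, h7]⟩
end

section
/- Let p > 3 be a prime. For the one-parameter family y² = x³ + t x² + t x + t², the first-moment sum satisfies ∑_{t mod p} a_t(p) = −p, where a_t(p) := −∑_{x mod p} χ(x³ + t x² + t x + t²). -/
/-!
Swapping the sums, for fixed `x` the polynomial is the quadratic `t² + (x² + x) t + x³` in `t`.
Over `𝔽_p`, `p` odd, `∑_t χ(t² + b t + c)` is `p - 1` if the discriminant vanishes and `-1`
otherwise (completing the square, and counting the `p - 1` points of the hyperbola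
`y² = t² - d`). The discriminant is `(x (x - 1))²`, which vanishes exactly at `x = 0, 1`, so the
double sum is `2 (p - 1) - (p - 2) = p`.
-/

open Finset

section QuadraticCharSums

variable {F : Type*} [Field F]

/-- On `t² - y² = d` the factors `t + y` and `t - y` multiply to `d`, so `u = t + y` is a
unit determining the point. -/
def unitsEquivHyperbola (h2 : (2 : F) ≠ 0) {d : F} (hd : d ≠ 0) :
    Fˣ ≃ {ty : F × F // ty.2 ^ 2 = ty.1 ^ 2 - d} where
  toFun u := ⟨((u + d * (u : F)⁻¹) / 2, (u - d * (u : F)⁻¹) / 2), by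
    have hu : (u : F) ≠ 0 := u.ne_zero
    field_simp
    ring⟩
  invFun s := Units.mk0 (s.1.1 + s.1.2) fun h0 ↦
    hd (by linear_combination (s.1.1 - s.1.2) * h0 + s.2)
  left_inv u := by
    have hu : (u : F) ≠ 0 := u.ne_zero
    ext
    simp only [Units.val_mk0]
    field_simp
    ring
  right_inv := by
    rintro ⟨⟨t, y⟩, h⟩
    have hty : t + y ≠ 0 := fun h0 ↦ hd (by linear_combination (t - y) * h0 + h)
    simp only [Subtype.mk_eq_mk, Units.val_mk0, Prod.mk.injEq]
    constructor
    · field_simp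
      linear_combination h
    · field_simp
      linear_combination -h

variable [Fintype F] [DecidableEq F]

theorem card_hyperbola (h2 : (2 : F) ≠ 0) {d : F} (hd : d ≠ 0) :
    Fintype.card {ty : F × F // ty.2 ^ 2 = ty.1 ^ 2 - d} = Fintype.card F - 1 := by
  rw [← Fintype.card_units, Fintype.card_congr (unitsEquivHyperbola h2 hd)]

theorem sum_quadraticChar_sq : ∑ t : F, quadraticChar F (t ^ 2) = Fintype.card F - 1 := by
  have hsq (t : F) : quadraticChar F (t ^ 2) = 1 - if t = 0 then 1 else 0 := by
    split_ifs with ht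
    · simp [ht]
    · simp [quadraticChar_sq_one' ht]
  simp [hsq, sum_sub_distrib]

variable (hF : ringChar F ≠ 2)
include hF

theorem quadraticChar_eq_card_sqrts_sub_one (a : F) :
    quadraticChar F a = Fintype.card {y : F // y ^ 2 = a} - 1 := by
  rw [Fintype.card_subtype, ← Set.toFinset_ofPred, quadraticChar_card_sqrts hF]
  ring

theorem sum_quadraticChar_sq_sub {d : F} (hd : d ≠ 0) :
    ∑ t : F, quadraticChar F (t ^ 2 - d) = -1 := by
  have hpoints : ∑ t : F, Fintype.card {y : F // y ^ 2 = t ^ 2 - d} = Fintype.card F - 1 := by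
    rw [← Fintype.card_sigma, ← card_hyperbola (Ring.two_ne_zero hF) hd]
    exact Fintype.card_congr (Equiv.subtypeProdEquivSigmaSubtype fun t y ↦ y ^ 2 = t ^ 2 - d).symm
  have hpos : 0 < Fintype.card F := Fintype.card_pos
  simp only [quadraticChar_eq_card_sqrts_sub_one hF, sum_sub_distrib, ← Nat.cast_sum, hpoints,
    sum_const, card_univ, nsmul_eq_mul, mul_one]
  omega

theorem sum_quadraticChar_quadratic (b c : F) :
    ∑ t : F, quadraticChar F (t ^ 2 + b * t + c) =
      if b ^ 2 - 4 * c = 0 then (Fintype.card F : ℤ) - 1 else -1 := by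
  have h2 : (2 : F) ≠ 0 := Ring.two_ne_zero hF
  have h4 : (4 : F) ≠ 0 := by simpa [← two_add_two_eq_four, ← two_mul] using mul_ne_zero h2 h2
  have hsquare (t : F) : (t - b / 2) ^ 2 + b * (t - b / 2) + c = t ^ 2 - (b ^ 2 - 4 * c) / 4 := by
    field_simp
    ring
  rw [← (Equiv.subRight (b / 2)).sum_comp]
  simp only [Equiv.subRight_apply, hsquare]
  split_ifs with hdisc
  · simp only [hdisc, zero_div, sub_zero]
    exact sum_quadraticChar_sq
  · exact sum_quadraticChar_sq_sub hF (div_ne_zero hdisc h4)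

end QuadraticCharSums

theorem discr_family_four_eq_zero_iff {F : Type*} [Field F] (x : F) :
    (x ^ 2 + x) ^ 2 - 4 * x ^ 3 = 0 ↔ x = 0 ∨ x = 1 := by
  have hsq : (x ^ 2 + x) ^ 2 - 4 * x ^ 3 = (x * (x - 1)) ^ 2 := by ring
  rw [hsq, sq_eq_zero_iff, mul_eq_zero, sub_eq_zero]

theorem sum_sum_quadraticChar_family_four {F : Type*} [Field F] [Fintype F] [DecidableEq F]
    (hF : ringChar F ≠ 2) :
    ∑ x : F, ∑ t : F, quadraticChar F (t ^ 2 + (x ^ 2 + x) * t + x ^ 3) = Fintype.card F := by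
  have hcount (x : F) : (if x = 0 ∨ x = 1 then (Fintype.card F : ℤ) - 1 else -1) =
      (if x = 0 then (Fintype.card F : ℤ) else 0) +
        (if x = 1 then (Fintype.card F : ℤ) else 0) - 1 := by
    split_ifs <;> simp_all
  simp only [sum_quadraticChar_quadratic hF, discr_family_four_eq_zero_iff, hcount]
  simp [sum_sub_distrib, sum_add_distrib]

/-- For a prime `p > 3` and the family `y² = x³ + t x² + t x + t²`,
the first-moment sum equals `-p`. -/
theorem first_moment_family_four (p : ℕ) [Fact p.Prime] (hp : 3 < p) :
    ∑ t : ZMod p,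
      (-∑ x : ZMod p,
        legendreSym p ((x.val : ℤ) ^ 3 + (t.val : ℤ) * (x.val : ℤ) ^ 2
          + (t.val : ℤ) * (x.val : ℤ) + (t.val : ℤ) ^ 2)) = -(p : ℤ) := by
  have hchar : ringChar (ZMod p) ≠ 2 := by rw [ZMod.ringChar_zmod_n]; omega
  have hχ (t x : ZMod p) : legendreSym p ((x.val : ℤ) ^ 3 + (t.val : ℤ) * (x.val : ℤ) ^ 2
      + (t.val : ℤ) * (x.val : ℤ) + (t.val : ℤ) ^ 2) =
        quadraticChar (ZMod p) (t ^ 2 + (x ^ 2 + x) * t + x ^ 3) := by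
    rw [legendreSym]
    push_cast [ZMod.natCast_zmod_val]
    ring_nf
  simp only [hχ, sum_neg_distrib]
  rw [sum_comm, sum_sum_quadraticChar_family_four hchar, ZMod.card]
end

section
/- Let p ≥ 5 be a prime. For the two-parameter family y² = x³ + t x + s x², the second-moment sum satisfies ∑_{t mod p} ∑_{s mod p} a_{t,s}(p)² = p³ − 2p² + p, where a_{t,s}(p) := −∑_{x mod p} χ(x³ + t x + s x²). -/
/-!
Work over a finite field `F` of odd characteristic with `q` elements. Expanding the square, the
second moment is `∑_{x,y} C(x,y)` with
`C(x,y) = ∑_{t,s} χ(x³ + t x + s x²) χ(y³ + t y + s y²)`.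
The substitution `t = u - x² - s x` turns the two arguments into `x u` and
`y (u + (y - x)(y + x + s))`. For `x ≠ y` the second one runs over all of `F` as `s` does, and
`χ` sums to zero, so `C(x,y) = 0`; for `x = y ≠ 0` one gets `C(x,x) = q (q - 1)`, and `C`
vanishes when `x = 0` or `y = 0`. Hence the sum is `(q - 1) · q (q - 1) = q³ - 2q² + q`.
-/

open Finset

lemma sum_cubic_family_eq_sum_shift {R M : Type*} [CommRing R] [Fintype R] [AddCommMonoid M]
    (g : R → R → M) (x y : R) :
    ∑ t : R, ∑ s : R, g (x ^ 3 + t * x + s * x ^ 2) (y ^ 3 + t * y + s * y ^ 2) =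
      ∑ s : R, ∑ u : R, g (x * u) (y * (u + (y - x) * (y + x + s))) := by
  rw [sum_comm]
  refine sum_congr rfl fun s _ => ?_
  refine Fintype.sum_equiv (Equiv.addRight (x ^ 2 + s * x)) _ _ fun t => ?_
  simp only [Equiv.coe_addRight]
  congr 1 <;> ring

section FiniteField

variable {F : Type*} [Field F] [Fintype F] [DecidableEq F]

lemma sum_ite_eq_zero_zero_const (c : ℤ) :
    ∑ x : F, (if x = 0 then 0 else c) = (Fintype.card F - 1) * c := by
  simp [sum_ite, filter_ne', Nat.cast_pred Fintype.card_pos]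

lemma quadraticChar_sum_mul_add_eq_zero (hF : ringChar F ≠ 2) {a : F} (ha : a ≠ 0) (b : F) :
    ∑ s : F, quadraticChar F (a * s + b) = 0 := by
  rw [← quadraticChar_sum_zero hF]
  exact Fintype.sum_equiv ((Equiv.mulLeft₀ a ha).trans (Equiv.addRight b)) _ _ fun _ => rfl

lemma quadraticChar_sq_eq_ite (a : F) : quadraticChar F a ^ 2 = if a = 0 then 0 else 1 := by
  split_ifs with ha
  · simp [ha]
  · exact quadraticChar_sq_one ha

lemma sum_quadraticChar_mul_sq {x : F} (hx : x ≠ 0) :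
    ∑ u : F, quadraticChar F (x * u) ^ 2 = Fintype.card F - 1 := by
  simp only [quadraticChar_sq_eq_ite, mul_eq_zero, hx, false_or, sum_ite_eq_zero_zero_const,
    mul_one]

lemma sum_quadraticChar_cubic_family_mul (hF : ringChar F ≠ 2) (x y : F) :
    ∑ t : F, ∑ s : F, quadraticChar F (x ^ 3 + t * x + s * x ^ 2) *
        quadraticChar F (y ^ 3 + t * y + s * y ^ 2) =
      if x ≠ 0 ∧ x = y then (Fintype.card F : ℤ) * (Fintype.card F - 1) else 0 := by
  rw [sum_cubic_family_eq_sum_shift (fun a b => quadraticChar F a * quadraticChar F b)]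
  by_cases hxy : x = y
  · subst hxy
    by_cases hx : x = 0
    · simp [hx]
    simp only [sub_self, zero_mul, add_zero, ← sq, sum_quadraticChar_mul_sq hx, sum_const,
      card_univ, nsmul_eq_mul, hx, ne_eq, not_false_eq_true, and_self, if_true]
  · have hyx : y - x ≠ 0 := sub_ne_zero.mpr (Ne.symm hxy)
    rw [if_neg (by tauto), sum_comm]
    refine sum_eq_zero fun u _ => ?_
    have hshift : ∀ s, u + (y - x) * (y + x + s) = (y - x) * s + (u + (y - x) * (y + x)) :=
      fun s => by ring
    simp only [map_mul, hshift, ← mul_sum, quadraticChar_sum_mul_add_eq_zero hF hyx, mul_zero]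

theorem sum_sq_sum_quadraticChar_cubic_family (hF : ringChar F ≠ 2) :
    ∑ t : F, ∑ s : F, (∑ x : F, quadraticChar F (x ^ 3 + t * x + s * x ^ 2)) ^ 2 =
      (Fintype.card F : ℤ) ^ 3 - 2 * (Fintype.card F : ℤ) ^ 2 + Fintype.card F := by
  have hswap : ∀ f : F → F → F → F → ℤ,
      ∑ t, ∑ s, ∑ x, ∑ y, f t s x y = ∑ x, ∑ y, ∑ t, ∑ s, f t s x y := fun f => by
    calc ∑ t, ∑ s, ∑ x, ∑ y, f t s x y = ∑ t, ∑ x, ∑ y, ∑ s, f t s x y :=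
          sum_congr rfl fun t _ => by rw [sum_comm]; exact sum_congr rfl fun x _ => sum_comm
      _ = ∑ x, ∑ y, ∑ t, ∑ s, f t s x y := by
          rw [sum_comm]; exact sum_congr rfl fun x _ => sum_comm
  simp_rw [sq (∑ _ : F, _), sum_mul_sum]
  rw [hswap]
  simp_rw [sum_quadraticChar_cubic_family_mul hF, ite_and, sum_ite_irrel, sum_ite_eq, mem_univ,
    if_true, sum_const_zero, ite_not, sum_ite_eq_zero_zero_const]
  ring

end FiniteField

lemma legendreSym_cubic_family_val {p : ℕ} [Fact p.Prime] (t s x : ZMod p) :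
    legendreSym p
        ((x.val : ℤ) ^ 3 + (t.val : ℤ) * (x.val : ℤ) + (s.val : ℤ) * (x.val : ℤ) ^ 2) =
      quadraticChar (ZMod p) (x ^ 3 + t * x + s * x ^ 2) := by
  simp [legendreSym, ZMod.natCast_val, ZMod.cast_id]

/-- For a prime `p ≥ 5` and the two-parameter family
`y² = x³ + t x + s x²`, the second-moment sum equals `p³ - 2p² + p`. -/
theorem second_moment_two_param_one (p : ℕ) [Fact p.Prime] (hp : 5 ≤ p) :
    ∑ t : ZMod p, ∑ s : ZMod p,
      (-∑ x : ZMod p,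
        legendreSym p ((x.val : ℤ) ^ 3 + (t.val : ℤ) * (x.val : ℤ)
          + (s.val : ℤ) * (x.val : ℤ) ^ 2)) ^ 2 =
      (p : ℤ) ^ 3 - 2 * (p : ℤ) ^ 2 + (p : ℤ) := by
  have hchar : ringChar (ZMod p) ≠ 2 := by
    rw [ZMod.ringChar_zmod_n]
    omega
  simp_rw [neg_sq, legendreSym_cubic_family_val]
  rw [sum_sq_sum_quadraticChar_cubic_family hchar, ZMod.card]
end

section
/- Let p ≥ 5 be a prime. For the two-parameter family y² = x³ + s x² − t² x, the second-moment sum satisfies ∑_{t mod p} ∑_{s mod p} a_{t,s}(p)² = p³ − p² − δ_{1,4}(p)·(2p² − 2p), where a_{t,s}(p) := −∑_{x mod p} χ(x³ + s x² − t² x). -/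
/-!
For `x ≠ 0`, `f(x) = x³ + s x² - t² x = x² (s + x - t²/x)`, so for fixed `t` and nonzero `x, y`
the sum over `s` of `χ(f(x)) χ(f(y))` is a correlation of two translates of `χ`: it is `q - 1`
when the translates agree, i.e. when `x = y` or `t² = -xy`, and `-1` otherwise. Counting the `t`
with `t² = -xy` turns the sum over `(t, s)` into `q χ(-xy)` off the diagonal and `q (q - 1)` on
it. Expanding the square, the moment is the sum of these over `(x, y)`; as `∑_y χ(-xy) = 0`, only
the diagonal correction survives, giving `(q - 1) (q (q - 1) - q χ(-1))`, and `χ(-1) = 1` exactly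
when `p ≡ 1 mod 4`.
-/

open Finset

section

variable {F : Type*} [Field F] [Fintype F] [DecidableEq F]

theorem sum_quadraticChar_mul_add_one (hF : ringChar F ≠ 2) :
    ∑ s : F, quadraticChar F s * quadraticChar F (s + 1) = -1 := by
  have hJ := jacobiSum_nontrivial_inv (quadraticChar_ne_one hF)
  rw [(quadraticChar_isQuadratic F).inv, jacobiSum] at hJ
  calc ∑ s : F, quadraticChar F s * quadraticChar F (s + 1)
      = ∑ s : F, quadraticChar F (-s) * quadraticChar F (-s + 1) :=
        (Equiv.sum_comp (Equiv.neg F) _).symm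
    _ = quadraticChar F (-1) * ∑ s : F, quadraticChar F s * quadraticChar F (1 - s) := by
        rw [mul_sum]
        refine sum_congr rfl fun s _ => ?_
        rw [neg_eq_neg_one_mul s, map_mul, neg_one_mul, neg_add_eq_sub]
        ring
    _ = -1 := by
        rw [hJ, mul_neg, ← sq, quadraticChar_sq_one (neg_ne_zero.mpr one_ne_zero)]

theorem sum_quadraticChar_mul_add (hF : ringChar F ≠ 2) (c : F) :
    ∑ s : F, quadraticChar F s * quadraticChar F (s + c) =
      if c = 0 then (Fintype.card F : ℤ) - 1 else -1 := by
  split_ifs with hc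
  · have hsq (s : F) : quadraticChar F s * quadraticChar F s = 1 - if s = 0 then 1 else 0 := by
      split_ifs with hs
      · simp [hs]
      · rw [← sq, quadraticChar_sq_one hs, sub_zero]
    simp only [hc, add_zero, hsq, sum_sub_distrib, sum_ite_eq', mem_univ, if_true, sum_const,
      card_univ, nsmul_eq_mul, mul_one]
  · rw [← sum_quadraticChar_mul_add_one hF]
    refine (Fintype.sum_equiv (Equiv.mulLeft₀ c hc) _ _ fun s => ?_).symm
    change _ = quadraticChar F (c * s) * quadraticChar F (c * s + c)
    rw [show c * s + c = c * (s + 1) by ring, map_mul, map_mul,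
      mul_mul_mul_comm, ← sq, quadraticChar_sq_one hc, one_mul]

theorem sum_quadraticChar_add_mul_add (hF : ringChar F ≠ 2) (u v : F) :
    ∑ s : F, quadraticChar F (s + u) * quadraticChar F (s + v) =
      if u = v then (Fintype.card F : ℤ) - 1 else -1 := by
  rw [← Equiv.sum_comp (Equiv.addRight (-u))]
  simp only [Equiv.coe_addRight, neg_add_cancel_right]
  simp_rw [show ∀ s, s + -u + v = s + (v - u) by intro s; ring]
  simp only [sum_quadraticChar_mul_add hF, sub_eq_zero, eq_comm]

theorem sum_ite_sq_eq_eq_card_mul_quadraticChar (hF : ringChar F ≠ 2) (a : F) :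
    ∑ t : F, (if t ^ 2 = a then (Fintype.card F : ℤ) - 1 else -1) =
      Fintype.card F * quadraticChar F a := by
  have hcard := quadraticChar_card_sqrts hF a
  rw [Set.toFinset_ofPred] at hcard
  have hsplit (t : F) : (if t ^ 2 = a then (Fintype.card F : ℤ) - 1 else -1) =
      Fintype.card F * (if t ^ 2 = a then 1 else 0) - 1 := by
    split_ifs <;> ring
  simp only [hsplit, sum_sub_distrib, ← mul_sum, sum_boole, hcard, sum_const, card_univ,
    nsmul_eq_mul, mul_one]
  ring

theorem quadraticChar_cubic_of_ne_zero {x : F} (hx : x ≠ 0) (t s : F) :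
    quadraticChar F (x ^ 3 + s * x ^ 2 - t ^ 2 * x) = quadraticChar F (s + (x - t ^ 2 / x)) := by
  rw [show x ^ 3 + s * x ^ 2 - t ^ 2 * x = x ^ 2 * (s + (x - t ^ 2 / x)) by field_simp; ring,
    map_mul, quadraticChar_sq_one' hx, one_mul]

theorem sum_quadraticChar_cubic_mul_cubic (hF : ringChar F ≠ 2) {x y : F} (hx : x ≠ 0)
    (hy : y ≠ 0) (t : F) :
    ∑ s : F, quadraticChar F (x ^ 3 + s * x ^ 2 - t ^ 2 * x) *
        quadraticChar F (y ^ 3 + s * y ^ 2 - t ^ 2 * y) =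
      if x = y ∨ t ^ 2 = -(x * y) then (Fintype.card F : ℤ) - 1 else -1 := by
  simp only [quadraticChar_cubic_of_ne_zero hx, quadraticChar_cubic_of_ne_zero hy,
    sum_quadraticChar_add_mul_add hF]
  have hdiff : x - t ^ 2 / x - (y - t ^ 2 / y) = (x - y) * (t ^ 2 + x * y) / (x * y) := by
    field_simp; ring
  have hiff : x - t ^ 2 / x = y - t ^ 2 / y ↔ x = y ∨ t ^ 2 = -(x * y) := by
    rw [← sub_eq_zero, hdiff, div_eq_zero_iff, mul_eq_zero, sub_eq_zero, add_eq_zero_iff_eq_neg,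
      or_iff_left (mul_ne_zero hx hy)]
  simp only [hiff]

theorem sum_sum_quadraticChar_cubic_mul_cubic (hF : ringChar F ≠ 2) (x y : F) :
    ∑ t : F, ∑ s : F, quadraticChar F (x ^ 3 + s * x ^ 2 - t ^ 2 * x) *
        quadraticChar F (y ^ 3 + s * y ^ 2 - t ^ 2 * y) =
      Fintype.card F * quadraticChar F (-(x * y)) +
        if x = y ∧ x ≠ 0 then
          (Fintype.card F : ℤ) * (Fintype.card F - 1) - Fintype.card F * quadraticChar F (-1)
        else 0 := by
  rcases eq_or_ne x 0 with rfl | hx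
  · simp
  rcases eq_or_ne y 0 with rfl | hy
  · simp
  simp only [sum_quadraticChar_cubic_mul_cubic hF hx hy]
  rcases eq_or_ne x y with rfl | hxy
  · rw [if_pos ⟨rfl, hx⟩, neg_eq_neg_one_mul, ← sq, map_mul, quadraticChar_sq_one' hx]
    simp only [true_or, if_true, sum_const, card_univ, nsmul_eq_mul]
    ring
  · simp only [hxy, false_or, false_and, if_false, add_zero,
      sum_ite_sq_eq_eq_card_mul_quadraticChar hF]

theorem sum_sum_sq_sum_quadraticChar_cubic (hF : ringChar F ≠ 2) :
    ∑ t : F, ∑ s : F, (∑ x : F, quadraticChar F (x ^ 3 + s * x ^ 2 - t ^ 2 * x)) ^ 2 =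
      ((Fintype.card F : ℤ) - 1) *
        ((Fintype.card F : ℤ) * (Fintype.card F - 1) - Fintype.card F * quadraticChar F (-1)) := by
  calc ∑ t : F, ∑ s : F, (∑ x : F, quadraticChar F (x ^ 3 + s * x ^ 2 - t ^ 2 * x)) ^ 2
      = ∑ x : F, ∑ y : F, ∑ t : F, ∑ s : F, quadraticChar F (x ^ 3 + s * x ^ 2 - t ^ 2 * x) *
          quadraticChar F (y ^ 3 + s * y ^ 2 - t ^ 2 * y) := by
        simp_rw [sq, sum_mul_sum]
        rw [sum_comm_cycle]
        exact sum_congr rfl fun x _ => sum_comm_cycle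
    _ = ∑ x : F, if x ≠ 0 then
          (Fintype.card F : ℤ) * (Fintype.card F - 1) - Fintype.card F * quadraticChar F (-1)
          else 0 := by
        simp only [sum_sum_quadraticChar_cubic_mul_cubic hF, sum_add_distrib, neg_mul_eq_neg_mul,
          map_mul, ← mul_sum, quadraticChar_sum_zero hF, mul_zero, zero_add, ite_and, sum_ite_eq,
          mem_univ, if_true]
    _ = _ := by
        rw [sum_ite, sum_const_zero, add_zero, sum_const, filter_ne',
          card_erase_of_mem (mem_univ _), card_univ, nsmul_eq_mul,
          Nat.cast_sub Fintype.card_pos, Nat.cast_one]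

/-- For a prime `p ≥ 5` and the two-parameter family
`y² = x³ + s x² - t² x`, the second-moment sum equals
`p³ - p² - δ_{1,4}(p) (2p² - 2p)`. -/
theorem second_moment_two_param_three (p : ℕ) [Fact p.Prime] (hp : 5 ≤ p) :
    ∑ t : ZMod p, ∑ s : ZMod p,
      (-∑ x : ZMod p,
        legendreSym p ((x.val : ℤ) ^ 3 + (s.val : ℤ) * (x.val : ℤ) ^ 2
          - (t.val : ℤ) ^ 2 * (x.val : ℤ))) ^ 2 =
      (p : ℤ) ^ 3 - (p : ℤ) ^ 2
        - (if p % 4 = 1 then 1 else 0) * (2 * (p : ℤ) ^ 2 - 2 * (p : ℤ)) := by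
  have hF : ringChar (ZMod p) ≠ 2 := by rw [ZMod.ringChar_zmod_n]; omega
  have hodd : p % 2 = 1 := (Fact.out : p.Prime).eq_two_or_odd.resolve_left (by omega)
  have hlegendre (t s x : ZMod p) :
      legendreSym p ((x.val : ℤ) ^ 3 + (s.val : ℤ) * (x.val : ℤ) ^ 2 - (t.val : ℤ) ^ 2 * x.val) =
        quadraticChar (ZMod p) (x ^ 3 + s * x ^ 2 - t ^ 2 * x) := by
    rw [legendreSym]
    push_cast [ZMod.natCast_val, ZMod.cast_id]
    rfl
  simp only [hlegendre, neg_sq]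
  rw [sum_sum_sq_sum_quadraticChar_cubic hF, quadraticChar_neg_one hF, ZMod.card,
    ZMod.χ₄_nat_eq_if_mod_four, if_neg (by omega)]
  split_ifs <;> ring
end
end
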